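/- Let < be a monomial preorder and <' a global monomial preorder (meaning 1 <' x_i or 1 and x_i are incomparable, for all i). Let <* be the product of < with <'. Then k[X]_{<*} = k[X]_<, i.e., S_{<*} = S_<. -/

import Mathlib

open MvPolynomial

structure MonomialPreorder (n : ℕ) where
  lt : (Fin n →₀ ℕ) → (Fin n →₀ ℕ) → Prop
  irrefl : ∀ a, ¬ lt a a
  trans : ∀ {a b c}, lt a b → lt b c → lt a c
  weak : ∀ {a b c}, (¬ lt a b ∧ ¬ lt b a) → (¬ lt b c ∧ ¬ lt c b) → ¬ lt a c ∧ ¬ lt c a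
  compat : ∀ {a b} (c), lt a b → lt (a + c) (b + c)
  cancel : ∀ {a b} (c), lt (a + c) (b + c) → lt a b

variable {n : ℕ} {k : Type*} [Field k]

open Classical in
noncomputable def leadingPart (P : MonomialPreorder n) (f : MvPolynomial (Fin n) k) :
    MvPolynomial (Fin n) k :=
  ∑ a ∈ f.support.filter (fun a => ∀ b ∈ f.support, ¬ P.lt a b),
    monomial a (coeff a f)

noncomputable def Sles (k : Type*) [Field k] (P : MonomialPreorder n) : Submonoid (MvPolynomial (Fin n) k) :=
  Submonoid.closure {u | leadingPart P u = 1}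

abbrev Loc (k : Type*) [Field k] (P : MonomialPreorder n) := Localization (Sles k P)

noncomputable def leadingIdealWrt (P Q : MonomialPreorder n) (G : Set (Loc k P)) :
    Ideal (MvPolynomial (Fin n) k) :=
  Ideal.span {q | ∃ f ∈ G, ∃ u p : MvPolynomial (Fin n) k, leadingPart P u = 1 ∧
    algebraMap (MvPolynomial (Fin n) k) (Loc k P) p = algebraMap (MvPolynomial (Fin n) k) (Loc k P) u * f ∧
    q = leadingPart Q p}

noncomputable def leadingIdeal (P : MonomialPreorder n) (G : Set (Loc k P)) :
    Ideal (MvPolynomial (Fin n) k) := leadingIdealWrt P P G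

noncomputable def leadingIdealPoly (P : MonomialPreorder n) (Q : Set (MvPolynomial (Fin n) k)) :
    Ideal (MvPolynomial (Fin n) k) :=
  Ideal.span (leadingPart P '' Q)

lemma exists_max_aux {α : Type*} (lt : α → α → Prop) (hirr : ∀ a, ¬ lt a a)
    (htr : ∀ {a b c}, lt a b → lt b c → lt a c) :
    ∀ (s : Finset α), ∀ a ∈ s, ∃ c ∈ s, (∀ b ∈ s, ¬ lt c b) ∧ (c = a ∨ lt a c) := by
  classical
  intro s
  induction s using Finset.strongInduction with
  | _ s ih =>
    intro a ha
    by_cases hmax : ∀ b ∈ s, ¬ lt a b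
    · exact ⟨a, ha, hmax, Or.inl rfl⟩
    · push_neg at hmax
      obtain ⟨b, hb, hab⟩ := hmax
      have hbs' : b ∈ s.filter (fun x => lt a x) := by
        simp [Finset.mem_filter, hb, hab]
      have hss : s.filter (fun x => lt a x) ⊂ s := by
        rw [Finset.ssubset_iff_of_subset (Finset.filter_subset _ _)]
        exact ⟨a, ha, by simp [hirr a]⟩
      obtain ⟨c, hc, hcmax, hcb⟩ := ih _ hss b hbs'
      rw [Finset.mem_filter] at hc
      refine ⟨c, hc.1, ?_, Or.inr hc.2⟩
      intro d hd hcd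
      have : d ∈ s.filter (fun x => lt a x) := by
        simp [Finset.mem_filter, hd, htr hc.2 hcd]
      exact hcmax d this hcd

lemma global_nlt (P' : MonomialPreorder n)
    (hglobal : ∀ i : Fin n, ¬ P'.lt (Finsupp.single i 1) 0) :
    ∀ a : Fin n →₀ ℕ, ¬ P'.lt a 0 := by
  suffices H : ∀ d, ∀ a : Fin n →₀ ℕ, (∑ j, a j) = d → ¬ P'.lt a 0 from fun a => H _ a rfl
  intro d
  induction d using Nat.strong_induction_on with
  | _ d ih =>
    intro a hd hlt
    by_cases ha : a = 0
    · exact P'.irrefl 0 (ha ▸ hlt)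
    · obtain ⟨i, hi⟩ : ∃ i, a i ≠ 0 := by
        by_contra h
        push_neg at h
        exact ha (Finsupp.ext h)
      set b := a - Finsupp.single i 1 with hbdef
      have hba : b + Finsupp.single i 1 = a := by
        ext j
        simp only [hbdef, Finsupp.add_apply, Finsupp.tsub_apply, Finsupp.single_apply]
        by_cases hj : i = j
        · subst hj; simp; omega
        · simp [hj]
      have hdb : (∑ j, b j) < d := by
        have hpt : ∀ j, a j = b j + Finsupp.single i 1 j := by
          intro j; rw [← hba]; simp
        have hsum : (∑ j, a j) = (∑ j, b j) + ∑ j, Finsupp.single i 1 j := by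
          rw [← Finset.sum_add_distrib]
          exact Finset.sum_congr rfl (fun j _ => hpt j)
        have h1 : (∑ j, (Finsupp.single i 1 : Fin n →₀ ℕ) j) = 1 := by
          simp [Finsupp.single_apply]
        omega
      by_cases h1 : P'.lt 0 (Finsupp.single i 1)
      · have h2 : P'.lt b a := by
          have := P'.compat b h1
          rw [zero_add, add_comm, hba] at this
          exact this
        exact ih _ hdb b rfl (P'.trans h2 hlt)
      · have h3 : ¬ P'.lt (Finsupp.single i 1) 0 := hglobal i
        have hincab : ¬ P'.lt a b ∧ ¬ P'.lt b a := by
          constructor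
          · intro h
            apply h3
            apply P'.cancel b
            rw [zero_add, add_comm, hba]
            exact h
          · intro h
            apply h1
            apply P'.cancel b
            rw [zero_add, add_comm, hba]
            exact h
        have hblt0 : P'.lt b 0 := by
          by_contra h4
          by_cases h5 : P'.lt 0 b
          · exact hincab.1 (P'.trans hlt h5)
          · exact (P'.weak hincab ⟨h4, h5⟩).1 hlt
        exact ih _ hdb b rfl hblt0

open Classical in
lemma coeff_leadingPart (P : MonomialPreorder n) (u : MvPolynomial (Fin n) k)
    (b : Fin n →₀ ℕ) :
    coeff b (leadingPart P u) =
      if b ∈ u.support.filter (fun a => ∀ c ∈ u.support, ¬ P.lt a c) then coeff b u else 0 := by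
  unfold leadingPart
  rw [MvPolynomial.coeff_sum]
  simp only [coeff_monomial]
  rw [Finset.sum_ite_eq']

open Classical in
lemma leadingPart_eq_one_iff (P : MonomialPreorder n) (u : MvPolynomial (Fin n) k) :
    leadingPart P u = 1 ↔
      ((0 : Fin n →₀ ℕ) ∈ u.support ∧ (∀ c ∈ u.support, ¬ P.lt 0 c) ∧ coeff 0 u = 1 ∧
        ∀ b ∈ u.support, (∀ c ∈ u.support, ¬ P.lt b c) → b = 0) := by
  constructor
  · intro h
    have h0 := coeff_leadingPart P u 0
    rw [h, coeff_one, if_pos rfl] at h0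
    by_cases hmem : (0 : Fin n →₀ ℕ) ∈ u.support.filter (fun a => ∀ c ∈ u.support, ¬ P.lt a c)
    · rw [if_pos hmem] at h0
      rw [Finset.mem_filter] at hmem
      refine ⟨hmem.1, hmem.2, h0.symm, ?_⟩
      intro b hb hbmax
      by_contra hb0
      have hbc := coeff_leadingPart P u b
      rw [h, coeff_one, if_neg (fun h' : (0:Fin n →₀ ℕ) = b => hb0 h'.symm),
        if_pos (Finset.mem_filter.mpr ⟨hb, hbmax⟩)] at hbc
      exact (MvPolynomial.mem_support_iff.mp hb) hbc.symm
    · rw [if_neg hmem] at h0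
      exact absurd h0 one_ne_zero
  · rintro ⟨h0mem, h0max, hcoeff, huniq⟩
    ext b
    rw [coeff_leadingPart, coeff_one]
    by_cases hb0 : b = 0
    · subst hb0
      rw [if_pos (Finset.mem_filter.mpr ⟨h0mem, h0max⟩), if_pos rfl, hcoeff]
    · have hmemneg : b ∉ u.support.filter (fun a => ∀ c ∈ u.support, ¬ P.lt a c) := by
        intro hmem
        rw [Finset.mem_filter] at hmem
        exact hb0 (huniq b hmem.1 hmem.2)
      rw [if_neg hmemneg, if_neg (fun h' : (0:Fin n →₀ ℕ) = b => hb0 h'.symm)]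

/-- If <' is a global monomial preorder (no x_i <' 1) and <* is the product
of < with <', then S_{<*} = S_<, hence k[X]_{<*} = k[X]_<. -/
theorem Sles_product_global (n : ℕ) (k : Type*) [Field k]
    (P P' Pstar : MonomialPreorder n)
    (hglobal : ∀ i : Fin n, ¬ P'.lt (Finsupp.single i 1) 0)
    (hstar : ∀ a b, Pstar.lt a b ↔ P.lt a b ∨ ((¬ P.lt a b ∧ ¬ P.lt b a) ∧ P'.lt a b)) :
    {u : MvPolynomial (Fin n) k | leadingPart Pstar u = 1} =
      {u : MvPolynomial (Fin n) k | leadingPart P u = 1} := by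
  ext u
  simp only [Set.mem_setOf_eq]
  rw [leadingPart_eq_one_iff, leadingPart_eq_one_iff]
  have hPsub : ∀ a b, P.lt a b → Pstar.lt a b := fun a b h => (hstar a b).mpr (Or.inl h)
  constructor
  · rintro ⟨h0mem, h0max, hcoeff, huniq⟩
    refine ⟨h0mem, fun c hc hlt => h0max c hc (hPsub _ _ hlt), hcoeff, ?_⟩
    intro b hb hbmax
    obtain ⟨c, hcmem, hcmax, hcb⟩ :=
      exists_max_aux Pstar.lt Pstar.irrefl Pstar.trans u.support b hb
    have hc0 : c = 0 := huniq c hcmem hcmax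
    rcases hcb with rfl | hlt
    · exact hc0
    · rw [hc0] at hlt
      rcases (hstar b 0).mp hlt with h | h
      · exact absurd h (hbmax 0 h0mem)
      · exact absurd h.2 (global_nlt P' hglobal b)
  · rintro ⟨h0mem, h0max, hcoeff, huniq⟩
    have huniqstar : ∀ b ∈ u.support, (∀ c ∈ u.support, ¬ Pstar.lt b c) → b = 0 := by
      intro b hb hbmax
      exact huniq b hb (fun c hc hlt => hbmax c hc (hPsub _ _ hlt))
    obtain ⟨c, hcmem, hcmax, _⟩ :=
      exists_max_aux Pstar.lt Pstar.irrefl Pstar.trans u.support 0 h0mem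
    have hc0 : c = 0 := huniqstar c hcmem hcmax
    subst hc0
    exact ⟨h0mem, hcmax, hcoeff, huniqstar⟩
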